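/- arXiv:math/0507317 — 2 statements merged into one kernel-verified Lean document; each statement's English description precedes it below -/
import Mathlib

section
/- For every smooth compactly supported function K on ℝ^{n−1}×ℝ^{n−1}×ℝ₊×ℝ₊ there is a constant M_K, depending only on the support of K and independent of ℏ, such that ‖κ_ℏ(K)‖ ≤ M_K · sup|K| for all 0<ℏ≤1, where ‖·‖ is the operator norm on L²(ℝⁿ₊). -/
open MeasureTheory Filter Topology Set
open scoped ContDiff

noncomputable section

/-- `ℝ^{n−1}`, the boundary directions. -/
abbrev Eb (n : ℕ) : Type := Fin (n - 1) → ℝ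

/-- `ℝⁿ` written as `ℝ^{n−1} × ℝ`; a point is `x = (x', xₙ)`. -/
abbrev Ef (n : ℕ) : Type := Eb n × ℝ

/-- Lebesgue measure restricted to the closed half-space `ℝⁿ₊ = {x : xₙ ≥ 0}`. -/
def muPlus (n : ℕ) : Measure (Ef n) := volume.restrict {p : Ef n | 0 ≤ p.2}

/-- `L²(ℝⁿ₊)`. -/
abbrev HS (n : ℕ) := Lp ℂ 2 (muPlus n)

/-- `T` is the ℏ-scaled truncated operator `ρ_ℏ(f)` on `L²(ℝⁿ₊)`:
`(ρ_ℏ(f)ξ)(x) = ∫_{v : xₙ ≥ ℏvₙ} f(x,v) ξ(x−ℏv) dv`. -/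
def rhoSpec (n : ℕ) (ℏ : ℝ) (f : Ef n × Ef n → ℂ) (T : HS n →L[ℂ] HS n) : Prop :=
  ∀ ξ : HS n, ⇑(T ξ) =ᵐ[muPlus n]
    fun x => ∫ v in {v : Ef n | ℏ * v.2 ≤ x.2},
      f (x, v) * (ξ (x.1 - ℏ • v.1, x.2 - ℏ * v.2))

/-- `S` is the ℏ-scaled Green-type operator `κ_ℏ(K)` on `L²(ℝⁿ₊)`:
`(κ_ℏ(K)ξ)(x',xₙ) = ∫_{ℝ^{n−1}} ∫₀^∞ K(x',y',xₙ/ℏ,yₙ) ξ(x'−ℏy', ℏyₙ) dyₙ dy'`. -/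
def kappaSpec (n : ℕ) (ℏ : ℝ) (K : Eb n × Eb n × ℝ × ℝ → ℂ) (S : HS n →L[ℂ] HS n) : Prop :=
  ∀ ξ : HS n, ⇑(S ξ) =ᵐ[muPlus n]
    fun x => ∫ y' : Eb n, ∫ yn in Ioi (0:ℝ),
      K (x.1, y', x.2 / ℏ, yn) * (ξ (x.1 - ℏ • y', ℏ * yn))

/-- The measure on `ℝⁿ₊ × ℝⁿ` (base point in the half-space, tangent vector free). -/
def muT (n : ℕ) : Measure (Ef n × Ef n) := (muPlus n).prod volume

/-- `L²(ℝⁿ₊ × ℝⁿ)`. -/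
abbrev HT (n : ℕ) := Lp ℂ 2 (muT n)

/-- `P` is the fiberwise convolution operator `π₀(f)` on `L²(ℝⁿ₊×ℝⁿ)`:
`(π₀(f)ξ)(x,v) = ∫ f(x,w) ξ(x,v−w) dw`. -/
def pi0Spec (n : ℕ) (f : Ef n × Ef n → ℂ) (P : HT n →L[ℂ] HT n) : Prop :=
  ∀ ξ : HT n, ⇑(P ξ) =ᵐ[muT n] fun p => ∫ w : Ef n, f (p.1, w) * (ξ (p.1, p.2 - w))

/-- Lebesgue measure on `ℝ^{n−1} × ℝ^{n−1} × ℝ` restricted to `ℝ^{n−1} × ℝ^{n−1} × ℝ₊`. -/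
def muB (n : ℕ) : Measure (Eb n × Eb n × ℝ) :=
  volume.restrict {q : Eb n × Eb n × ℝ | 0 ≤ q.2.2}

/-- `L²(ℝ^{n−1} × ℝ^{n−1} × ℝ₊)`. -/
abbrev HB (n : ℕ) := Lp ℂ 2 (muB n)

/-- `B` is the boundary operator `π₀^∂(f⊕K)` on `L²(ℝ^{n−1}×ℝ^{n−1}×ℝ₊)`:
`(π₀^∂(f⊕K)ξ)(x',v',vₙ) = ∫_{ℝ^{n−1}} ∫₀^∞ [f(x',0,v'−w',vₙ−wₙ) + K(x',v'−w',vₙ,wₙ)]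
ξ(x',w',wₙ) dwₙ dw'`. -/
def piBSpec (n : ℕ) (f : Ef n × Ef n → ℂ) (K : Eb n × Eb n × ℝ × ℝ → ℂ)
    (B : HB n →L[ℂ] HB n) : Prop :=
  ∀ ξ : HB n, ⇑(B ξ) =ᵐ[muB n]
    fun q => ∫ w' : Eb n, ∫ wn in Ioi (0:ℝ),
      (f ((q.1, (0:ℝ)), (q.2.1 - w', q.2.2 - wn)) + K (q.1, q.2.1 - w', q.2.2, wn)) *
        (ξ (q.1, w', wn))

/-- Fiberwise convolution `(f*g)(x,w) = ∫ f(x,v) g(x,w−v) dv`. -/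
def fconv (n : ℕ) (f g : Ef n × Ef n → ℂ) : Ef n × Ef n → ℂ :=
  fun p => ∫ v : Ef n, f (p.1, v) * g (p.1, p.2 - v)

/-- The Green symbol `l(f,g)(x',y',xₙ,yₙ) =
−∫_{ℝ^{n−1}} ∫_{xₙ}^∞ f(x',0,y'−v',vₙ) g(x',0,v',xₙ−vₙ−yₙ) dvₙ dv'`. -/
def lGreen (n : ℕ) (f g : Ef n × Ef n → ℂ) : Eb n × Eb n × ℝ × ℝ → ℂ :=
  fun q => -(∫ v' : Eb n, ∫ vn in Ici q.2.2.1,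
    f ((q.1, (0:ℝ)), (q.2.1 - v', vn)) * g ((q.1, (0:ℝ)), (v', q.2.2.1 - vn - q.2.2.2)))

lemma muPlus_eq_prod (n : ℕ) :
    muPlus n = (volume : Measure (Eb n)).prod (volume.restrict (Ici (0:ℝ))) := by
  have h : {p : Ef n | 0 ≤ p.2} = (univ : Set (Eb n)) ×ˢ Ici (0:ℝ) := by
    ext ⟨a, b⟩; simp [Set.mem_prod]
  rw [muPlus, Measure.volume_eq_prod, h, ← Measure.prod_restrict, Measure.restrict_univ]

lemma sqrt_sq_ennreal (a : ENNReal) : (a ^ ((1:ℝ)/2)) ^ (2:ℕ) = a := by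
  rw [← ENNReal.rpow_natCast _ 2, ← ENNReal.rpow_mul]; norm_num

lemma sq_sqrt_ennreal (a : ENNReal) : (a ^ (2:ℕ)) ^ ((1:ℝ)/2) = a := by
  rw [← ENNReal.rpow_natCast a 2, ← ENNReal.rpow_mul]; norm_num

lemma rpow_two_eq_pow_two (a : ENNReal) : a ^ (2:ℝ) = a ^ (2:ℕ) := by
  rw [← ENNReal.rpow_natCast a 2]; norm_num

lemma kappa_op_bound (n : ℕ) (K' : Eb n × Eb n × ℝ × ℝ → ℂ)
    (hcont : Continuous K') {C R : ℝ} (hC : 0 ≤ C) (hR : 0 ≤ R)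
    (hbound : ∀ q, ‖K' q‖ ≤ C)
    (hvan : ∀ (x' y' : Eb n) (a b : ℝ), (R < dist y' 0 ∨ R < |a| ∨ R < |b|) → K' (x', y', a, b) = 0)
    {ℏ : ℝ} (hℏ0 : 0 < ℏ) (S : HS n →L[ℂ] HS n) (hspec : kappaSpec n ℏ K' S) :
    ‖S‖ ≤ (volume (Metric.closedBall (0 : Eb n) R)).toReal * R * C := by
  classical
  haveI : SFinite (muPlus n) := by rw [muPlus]; infer_instance
  haveI : SigmaFinite (muPlus n) := by rw [muPlus]; exact Restrict.sigmaFinite _ _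
  set ν' : Measure (Eb n) := volume with hν'
  set νI : Measure ℝ := volume.restrict (Ici (0:ℝ)) with hνI
  set νO : Measure ℝ := volume.restrict (Ioi (0:ℝ)) with hνO
  set ρ : Measure (Eb n × ℝ) := ν'.prod νO with hρdef
  have hμ : muPlus n = ν'.prod νI := muPlus_eq_prod n
  set A : Set (Eb n) := Metric.closedBall 0 R with hA
  have hAm : MeasurableSet A := measurableSet_closedBall
  set D : Set (Eb n × ℝ) := A ×ˢ Icc (-R) R with hD
  have hDm : MeasurableSet D := hAm.prod measurableSet_Icc
  have hVA : ν' A ≠ ⊤ := (isCompact_closedBall 0 R).measure_lt_top.ne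
  set cC : ENNReal := ENNReal.ofReal C with hcC
  have hcC_ne : cC ≠ ⊤ := ENNReal.ofReal_ne_top
  -- measure of D
  have hIccIoi : Icc (-R) R ∩ Ioi (0:ℝ) = Ioc 0 R := by
    ext z; constructor
    · rintro ⟨⟨h1, h2⟩, h3⟩; exact ⟨h3, h2⟩
    · rintro ⟨h1, h2⟩; exact ⟨⟨by linarith, h2⟩, h1⟩
  have hνOIcc : νO (Icc (-R) R) = ENNReal.ofReal R := by
    rw [hνO, Measure.restrict_apply measurableSet_Icc, hIccIoi, Real.volume_Ioc, sub_zero]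
  have hρD : ρ D = ν' A * ENNReal.ofReal R := by
    rw [hρdef, hD, Measure.prod_prod, hνOIcc]
  have hρD_ne : ρ D ≠ ⊤ := by
    rw [hρD]; exact ENNReal.mul_ne_top hVA ENNReal.ofReal_ne_top
  have hM0 : (0:ℝ) ≤ (volume (Metric.closedBall (0 : Eb n) R)).toReal * R * C := by positivity
  refine S.opNorm_le_bound hM0 fun ξ => ?_
  -- basic functions
  have hmξ : Measurable (⇑ξ) := (Lp.stronglyMeasurable ξ).measurable
  set g : Ef n → ENNReal := fun u => (‖ξ u‖₊ : ENNReal) ^ (2:ℕ) with hgdef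
  have hmg : Measurable g := hmξ.enorm.pow_const 2
  set χ : Ef n → ENNReal := fun x => (Iic (ℏ*R)).indicator 1 x.2 with hχdef
  have hχ_le : ∀ x, χ x ≤ 1 := by
    intro x; rw [hχdef]; by_cases h : x.2 ∈ Iic (ℏ*R)
    · simp [Set.indicator_of_mem h]
    · simp [Set.indicator_of_notMem h]
  have hχ_ne : ∀ x, χ x ≠ ⊤ := fun x => ne_top_of_le_ne_top ENNReal.one_ne_top (hχ_le x)
  have hχ_sq : ∀ x, χ x ^ (2:ℕ) = χ x := by
    intro x; rw [hχdef]; by_cases h : x.2 ∈ Iic (ℏ*R)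
    · simp [Set.indicator_of_mem h]
    · simp [Set.indicator_of_notMem h]
  have hD_le : ∀ p, D.indicator (1 : (Eb n × ℝ) → ENNReal) p ≤ 1 := by
    intro p; by_cases h : p ∈ D
    · simp [Set.indicator_of_mem h]
    · simp [Set.indicator_of_notMem h]
  have hD_ne : ∀ p, D.indicator (1 : (Eb n × ℝ) → ENNReal) p ≠ ⊤ :=
    fun p => ne_top_of_le_ne_top ENNReal.one_ne_top (hD_le p)
  -- the explicit image function
  obtain ⟨F, hFdef⟩ : ∃ F : Ef n → ℂ, F = fun x => ∫ y' : Eb n, ∫ yn in Ioi (0:ℝ),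
      K' (x.1, y', x.2 / ℏ, yn) * (ξ (x.1 - ℏ • y', ℏ * yn)) := ⟨_, rfl⟩
  -- pointwise kernel bound
  have hKb : ∀ (x : Ef n) (p : Eb n × ℝ),
      (‖K' (x.1, p.1, x.2 / ℏ, p.2)‖₊ : ENNReal) ≤ (cC * χ x) * D.indicator 1 p := by
    intro x p
    by_cases hx : x.2 ≤ ℏ * R
    · by_cases hp : p ∈ D
      · have h1 : χ x = 1 := by rw [hχdef]; simp [Set.indicator_of_mem, hx, Set.mem_Iic]
        have h2 : D.indicator (1 : (Eb n × ℝ) → ENNReal) p = 1 := Set.indicator_of_mem hp 1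
        rw [h1, h2, mul_one, mul_one, ← enorm_eq_nnnorm, ← ofReal_norm]
        exact ENNReal.ofReal_le_ofReal (hbound _)
      · have h0 : K' (x.1, p.1, x.2 / ℏ, p.2) = 0 := by
          rw [hD, Set.mem_prod, hA] at hp
          push_neg at hp
          by_cases hp1 : p.1 ∈ Metric.closedBall (0 : Eb n) R
          · have h3 : ¬ |p.2| ≤ R := by
              intro hc
              exact (hp hp1) (by rw [Set.mem_Icc]; exact abs_le.mp hc)
            exact hvan _ _ _ _ (Or.inr (Or.inr (lt_of_not_ge h3)))
          · rw [Metric.mem_closedBall] at hp1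
            exact hvan _ _ _ _ (Or.inl (lt_of_not_ge hp1))
        rw [h0]; simp
    · have h3 : R < |x.2 / ℏ| := by
        have : R < x.2 / ℏ := (lt_div_iff₀ hℏ0).mpr (by linarith [lt_of_not_ge hx])
        exact lt_of_lt_of_le this (le_abs_self _)
      rw [hvan _ _ _ _ (Or.inr (Or.inl h3))]; simp
  -- step A: pointwise bound on ‖F x‖ via Cauchy–Schwarz
  obtain ⟨I, hIdef⟩ : ∃ I : Ef n → ENNReal, I = fun x =>
      ∫⁻ p, D.indicator 1 p * g (x.1 - ℏ • p.1, ℏ * p.2) ∂ρ := ⟨_, rfl⟩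
  have hstepA : ∀ x : Ef n, (‖F x‖₊ : ENNReal) ≤
      (cC * χ x) * ((ρ D) ^ ((1:ℝ)/2) * (I x) ^ ((1:ℝ)/2)) := by
    intro x
    have hmT : Measurable fun p : Eb n × ℝ => ξ (x.1 - ℏ • p.1, ℏ * p.2) := by
      apply hmξ.comp; fun_prop
    have hmKp : Measurable fun p : Eb n × ℝ => K' (x.1, p.1, x.2 / ℏ, p.2) := by
      apply hcont.measurable.comp; fun_prop
    have hmK : Measurable fun p : Eb n × ℝ =>
        (‖K' (x.1, p.1, x.2 / ℏ, p.2) * ξ (x.1 - ℏ • p.1, ℏ * p.2)‖₊ : ENNReal) :=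
      (hmKp.mul hmT).enorm
    have hmnξ : Measurable fun p : Eb n × ℝ => (‖ξ (x.1 - ℏ • p.1, ℏ * p.2)‖₊ : ENNReal) :=
      hmT.enorm
    have hCS : ∫⁻ p, D.indicator 1 p * (‖ξ (x.1 - ℏ • p.1, ℏ * p.2)‖₊ : ENNReal) ∂ρ ≤
        (ρ D) ^ ((1:ℝ)/2) * (I x) ^ ((1:ℝ)/2) := by
      have h := ENNReal.lintegral_mul_le_Lp_mul_Lq ρ
        Real.HolderConjugate.two_two
        ((measurable_one.indicator hDm).aemeasurable)
        (((measurable_one.indicator hDm).mul hmnξ).aemeasurable)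
        (f := fun p => D.indicator 1 p)
        (g := fun p => D.indicator 1 p * (‖ξ (x.1 - ℏ • p.1, ℏ * p.2)‖₊ : ENNReal))
      have e1 : ∀ p, (fun p => D.indicator (1 : (Eb n × ℝ) → ENNReal) p) p *
          (D.indicator 1 p * (‖ξ (x.1 - ℏ • p.1, ℏ * p.2)‖₊ : ENNReal)) =
          D.indicator 1 p * (‖ξ (x.1 - ℏ • p.1, ℏ * p.2)‖₊ : ENNReal) := by
        intro p; by_cases hp : p ∈ D <;>
          simp [Set.indicator_of_mem, Set.indicator_of_notMem, hp]
      have e2 : ∀ p, (D.indicator (1 : (Eb n × ℝ) → ENNReal) p) ^ (2:ℝ) = D.indicator 1 p := by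
        intro p; by_cases hp : p ∈ D <;>
          simp [Set.indicator_of_mem, Set.indicator_of_notMem, hp,
            ENNReal.zero_rpow_of_pos (by norm_num : (0:ℝ) < 2)]
      have e3 : ∀ p, (D.indicator 1 p * (‖ξ (x.1 - ℏ • p.1, ℏ * p.2)‖₊ : ENNReal)) ^ (2:ℝ) =
          D.indicator 1 p * g (x.1 - ℏ • p.1, ℏ * p.2) := by
        intro p; by_cases hp : p ∈ D
        · rw [Set.indicator_of_mem hp, Pi.one_apply, one_mul, one_mul,
            rpow_two_eq_pow_two, hgdef]
        · simp [Set.indicator_of_notMem, hp,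
            ENNReal.zero_rpow_of_pos (by norm_num : (0:ℝ) < 2)]
      simp only [Pi.mul_apply] at h
      calc ∫⁻ p, D.indicator 1 p * (‖ξ (x.1 - ℏ • p.1, ℏ * p.2)‖₊ : ENNReal) ∂ρ
          = ∫⁻ p, (fun p => D.indicator (1 : (Eb n × ℝ) → ENNReal) p) p *
            (D.indicator 1 p * (‖ξ (x.1 - ℏ • p.1, ℏ * p.2)‖₊ : ENNReal)) ∂ρ :=
            (lintegral_congr e1).symm
        _ ≤ (∫⁻ p, (D.indicator (1 : (Eb n × ℝ) → ENNReal) p) ^ (2:ℝ) ∂ρ) ^ ((1:ℝ)/2) *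
            (∫⁻ p, (D.indicator 1 p * (‖ξ (x.1 - ℏ • p.1, ℏ * p.2)‖₊ : ENNReal)) ^ (2:ℝ) ∂ρ)
              ^ ((1:ℝ)/2) := h
        _ = (ρ D) ^ ((1:ℝ)/2) * (I x) ^ ((1:ℝ)/2) := by
            rw [lintegral_congr e2, lintegral_congr e3, lintegral_indicator_one hDm, hIdef]
    calc (‖F x‖₊ : ENNReal)
        ≤ ∫⁻ y', (‖∫ yn in Ioi (0:ℝ), K' (x.1, y', x.2 / ℏ, yn) *
            (ξ (x.1 - ℏ • y', ℏ * yn))‖₊ : ENNReal) ∂ν' := by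
          rw [hFdef]; exact enorm_integral_le_lintegral_enorm _
      _ ≤ ∫⁻ y', ∫⁻ yn, (‖K' (x.1, y', x.2 / ℏ, yn) *
            (ξ (x.1 - ℏ • y', ℏ * yn))‖₊ : ENNReal) ∂νO ∂ν' :=
          lintegral_mono fun y' => enorm_integral_le_lintegral_enorm _
      _ = ∫⁻ p, (‖K' (x.1, p.1, x.2 / ℏ, p.2) *
            (ξ (x.1 - ℏ • p.1, ℏ * p.2))‖₊ : ENNReal) ∂ρ :=
          (lintegral_prod _ hmK.aemeasurable).symm
      _ ≤ ∫⁻ p, (cC * χ x) * (D.indicator 1 p *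
            (‖ξ (x.1 - ℏ • p.1, ℏ * p.2)‖₊ : ENNReal)) ∂ρ := by
          apply lintegral_mono
          intro p
          beta_reduce
          rw [nnnorm_mul, ENNReal.coe_mul, ← mul_assoc]
          exact mul_le_mul_left (hKb x p) _
      _ = (cC * χ x) * ∫⁻ p, D.indicator 1 p *
            (‖ξ (x.1 - ℏ • p.1, ℏ * p.2)‖₊ : ENNReal) ∂ρ :=
          lintegral_const_mul' _ _ (ENNReal.mul_ne_top hcC_ne (hχ_ne x))
      _ ≤ (cC * χ x) * ((ρ D) ^ ((1:ℝ)/2) * (I x) ^ ((1:ℝ)/2)) := mul_le_mul_right hCS _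
  -- squared pointwise bound
  have hstepA2 : ∀ x : Ef n, (‖F x‖₊ : ENNReal) ^ (2:ℕ) ≤ (cC ^ (2:ℕ) * ρ D) * (χ x * I x) := by
    intro x
    calc (‖F x‖₊ : ENNReal) ^ (2:ℕ)
        ≤ ((cC * χ x) * ((ρ D) ^ ((1:ℝ)/2) * (I x) ^ ((1:ℝ)/2))) ^ (2:ℕ) :=
          pow_le_pow_left' (hstepA x) 2
      _ = (cC ^ (2:ℕ) * ρ D) * (χ x * I x) := by
          rw [mul_pow, mul_pow, mul_pow, sqrt_sq_ennreal, sqrt_sq_ennreal, hχ_sq]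
          ring
  -- measurability on the product space
  have hmprod : Measurable fun q : Ef n × (Eb n × ℝ) =>
      χ q.1 * (D.indicator 1 q.2 * g (q.1.1 - ℏ • q.2.1, ℏ * q.2.2)) := by
    apply Measurable.mul
    · rw [hχdef]
      exact (measurable_one.indicator measurableSet_Iic).comp (measurable_fst.snd)
    · apply Measurable.mul
      · exact (measurable_one.indicator hDm).comp measurable_snd
      · apply hmg.comp; fun_prop
  -- swap the order of integration
  have hswap : ∫⁻ x, χ x * I x ∂(muPlus n) =
      ∫⁻ p, D.indicator 1 p *
        (∫⁻ x, χ x * g (x.1 - ℏ • p.1, ℏ * p.2) ∂(muPlus n)) ∂ρ := by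
    have h1 : ∀ x, χ x * I x =
        ∫⁻ p, χ x * (D.indicator 1 p * g (x.1 - ℏ • p.1, ℏ * p.2)) ∂ρ := by
      intro x
      rw [hIdef]
      exact (lintegral_const_mul' _ _ (hχ_ne x)).symm
    rw [lintegral_congr h1,
      lintegral_lintegral_swap hmprod.aemeasurable]
    apply lintegral_congr
    intro p
    have h2 : ∀ x : Ef n, χ x * (D.indicator 1 p * g (x.1 - ℏ • p.1, ℏ * p.2)) =
        D.indicator 1 p * (χ x * g (x.1 - ℏ • p.1, ℏ * p.2)) := fun x => mul_left_comm _ _ _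
    rw [lintegral_congr h2]
    exact lintegral_const_mul' _ _ (hD_ne p)
  -- the marginal function G
  obtain ⟨G, hGdef⟩ : ∃ G : ℝ → ENNReal, G = fun t => ∫⁻ u, g (u, t) ∂ν' := ⟨_, rfl⟩
  have hGm : Measurable G := by
    rw [hGdef]; exact hmg.lintegral_prod_left'
  -- inner x-integral
  have hJ : ∀ p : Eb n × ℝ, ∫⁻ x, χ x * g (x.1 - ℏ • p.1, ℏ * p.2) ∂(muPlus n) =
      ENNReal.ofReal (ℏ * R) * G (ℏ * p.2) := by
    intro p
    have h1 : ∀ z : Ef n, χ z * g (z.1 - ℏ • p.1, ℏ * p.2) =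
        (fun u : Eb n => g (u - ℏ • p.1, ℏ * p.2)) z.1 *
          (fun b : ℝ => (Iic (ℏ*R)).indicator 1 b) z.2 := by
      intro z; rw [hχdef]; exact mul_comm _ _
    have hm1 : Measurable fun u : Eb n => g (u - ℏ • p.1, ℏ * p.2) := by
      apply hmg.comp; fun_prop
    rw [hμ, lintegral_congr h1,
      lintegral_prod_mul hm1.aemeasurable
        ((measurable_one.indicator measurableSet_Iic)).aemeasurable]
    have h2 : ∫⁻ u, g (u - ℏ • p.1, ℏ * p.2) ∂ν' = G (ℏ * p.2) := by
      rw [hGdef]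
      exact lintegral_sub_right_eq_self (fun u => g (u, ℏ * p.2)) (ℏ • p.1)
    have h3 : ∫⁻ b, (Iic (ℏ*R)).indicator 1 b ∂νI = ENNReal.ofReal (ℏ * R) := by
      rw [lintegral_indicator_one measurableSet_Iic, hνI,
        Measure.restrict_apply measurableSet_Iic]
      have h4 : Iic (ℏ*R) ∩ Ici (0:ℝ) = Icc 0 (ℏ*R) := by
        ext z; rw [Set.mem_inter_iff, Set.mem_Icc, Set.mem_Iic, Set.mem_Ici, and_comm]
      rw [h4, Real.volume_Icc, sub_zero]
    rw [h2, h3, mul_comm]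
  -- outer p-integral
  have houter : ∫⁻ p, D.indicator 1 p * (ENNReal.ofReal (ℏ * R) * G (ℏ * p.2)) ∂ρ =
      ENNReal.ofReal (ℏ * R) * (ν' A *
        ∫⁻ yn, (Icc (-R) R).indicator 1 yn * G (ℏ * yn) ∂νO) := by
    have h1 : ∀ p : Eb n × ℝ, D.indicator 1 p * (ENNReal.ofReal (ℏ * R) * G (ℏ * p.2)) =
        (fun u : Eb n => A.indicator 1 u) p.1 *
          (fun b : ℝ => ENNReal.ofReal (ℏ * R) * ((Icc (-R) R).indicator 1 b * G (ℏ * b))) p.2 := by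
      rintro ⟨p1, p2⟩
      rw [hD, Set.indicator_prod_one]
      ring
    have hm2 : Measurable fun b : ℝ =>
        ENNReal.ofReal (ℏ * R) * ((Icc (-R) R).indicator 1 b * G (ℏ * b)) := by
      apply measurable_const.mul
      exact (measurable_one.indicator measurableSet_Icc).mul
        (hGm.comp (measurable_const_mul ℏ))
    rw [lintegral_congr h1, hρdef,
      lintegral_prod_mul ((measurable_one.indicator hAm)).aemeasurable hm2.aemeasurable,
      lintegral_indicator_one hAm,
      lintegral_const_mul' _ _ ENNReal.ofReal_ne_top]
    ring
  -- reduce the yn-integral to a set integral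
  have hinner : ∫⁻ yn, (Icc (-R) R).indicator 1 yn * G (ℏ * yn) ∂νO =
      ∫⁻ yn in Ioc (0:ℝ) R, G (ℏ * yn) ∂(volume : Measure ℝ) := by
    have h1 : ∀ yn : ℝ, (Icc (-R) R).indicator 1 yn * G (ℏ * yn) =
        (Icc (-R) R).indicator (fun b => G (ℏ * b)) yn := by
      intro yn; by_cases h : yn ∈ Icc (-R) R <;>
        simp [Set.indicator_of_mem, Set.indicator_of_notMem, h]
    rw [lintegral_congr h1, lintegral_indicator measurableSet_Icc, hνO,
      Measure.restrict_restrict measurableSet_Icc, hIccIoi]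
  -- scaling in the last variable
  have hscale : ∫⁻ yn in Ioc (0:ℝ) R, G (ℏ * yn) ∂(volume : Measure ℝ) =
      ENNReal.ofReal ℏ⁻¹ * ∫⁻ t in Ioc 0 (ℏ * R), G t ∂(volume : Measure ℝ) := by
    have h1 : ∀ yn : ℝ, (Ioc (0:ℝ) R).indicator (fun b => G (ℏ * b)) yn =
        (Ioc 0 (ℏ * R)).indicator G (ℏ * yn) := by
      intro yn
      by_cases h : yn ∈ Ioc (0:ℝ) R
      · rw [Set.indicator_of_mem h, Set.indicator_of_mem]
        exact ⟨mul_pos hℏ0 h.1, mul_le_mul_of_nonneg_left h.2 hℏ0.le⟩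
      · rw [Set.indicator_of_notMem h, Set.indicator_of_notMem]
        intro hc
        exact h ⟨by nlinarith [hc.1], le_of_mul_le_mul_left hc.2 hℏ0⟩
    calc ∫⁻ yn in Ioc (0:ℝ) R, G (ℏ * yn) ∂(volume : Measure ℝ)
        = ∫⁻ yn, (Ioc (0:ℝ) R).indicator (fun b => G (ℏ * b)) yn ∂(volume : Measure ℝ) :=
          (lintegral_indicator measurableSet_Ioc _).symm
      _ = ∫⁻ yn, (Ioc 0 (ℏ * R)).indicator G (ℏ * yn) ∂(volume : Measure ℝ) :=
          lintegral_congr h1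
      _ = ∫⁻ t, (Ioc 0 (ℏ * R)).indicator G t ∂((volume : Measure ℝ).map (ℏ * ·)) :=
          (lintegral_map (hGm.indicator measurableSet_Ioc) (measurable_const_mul ℏ)).symm
      _ = ENNReal.ofReal ℏ⁻¹ * ∫⁻ t in Ioc 0 (ℏ * R), G t ∂(volume : Measure ℝ) := by
          rw [Real.map_volume_mul_left hℏ0.ne', lintegral_smul_measure, smul_eq_mul,
            abs_of_pos (inv_pos.mpr hℏ0), lintegral_indicator measurableSet_Ioc]
  -- total integral identity
  have hLxi : ∫⁻ t in Ioi (0:ℝ), G t ∂(volume : Measure ℝ) = ∫⁻ x, g x ∂(muPlus n) := by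
    have h1 : (volume : Measure ℝ).restrict (Ioi 0) = νI := by
      rw [hνI]; exact Measure.restrict_congr_set Ioi_ae_eq_Ici
    rw [h1, hμ, lintegral_prod_symm _ hmg.aemeasurable]
    exact lintegral_congr fun t => by rw [hGdef]
  -- main chain
  have hY : ∫⁻ x, (‖F x‖₊ : ENNReal) ^ (2:ℕ) ∂(muPlus n) ≤
      (cC * ν' A * ENNReal.ofReal R) ^ (2:ℕ) * ∫⁻ x, g x ∂(muPlus n) := by
    calc ∫⁻ x, (‖F x‖₊ : ENNReal) ^ (2:ℕ) ∂(muPlus n)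
        ≤ ∫⁻ x, (cC ^ (2:ℕ) * ρ D) * (χ x * I x) ∂(muPlus n) := lintegral_mono hstepA2
      _ = (cC ^ (2:ℕ) * ρ D) * ∫⁻ x, χ x * I x ∂(muPlus n) :=
          lintegral_const_mul' _ _
            (ENNReal.mul_ne_top (ENNReal.pow_ne_top hcC_ne) hρD_ne)
      _ = (cC ^ (2:ℕ) * ρ D) *
          ∫⁻ p, D.indicator 1 p * (ENNReal.ofReal (ℏ * R) * G (ℏ * p.2)) ∂ρ := by
          rw [hswap]
          congr 1
          exact lintegral_congr fun p => by rw [hJ p]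
      _ = (cC ^ (2:ℕ) * ρ D) * (ENNReal.ofReal (ℏ * R) * (ν' A *
            (ENNReal.ofReal ℏ⁻¹ * ∫⁻ t in Ioc 0 (ℏ * R), G t ∂(volume : Measure ℝ)))) := by
          rw [houter, hinner, hscale]
      _ ≤ (cC ^ (2:ℕ) * ρ D) * (ENNReal.ofReal (ℏ * R) * (ν' A *
            (ENNReal.ofReal ℏ⁻¹ * ∫⁻ t in Ioi (0:ℝ), G t ∂(volume : Measure ℝ)))) := by
          gcongr
          exact Ioc_subset_Ioi_self
      _ = (cC * ν' A * ENNReal.ofReal R) ^ (2:ℕ) * ∫⁻ x, g x ∂(muPlus n) := by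
          rw [hLxi, hρD]
          have hhR : ENNReal.ofReal (ℏ * R) * ENNReal.ofReal ℏ⁻¹ = ENNReal.ofReal R := by
            rw [← ENNReal.ofReal_mul (by positivity)]
            congr 1
            field_simp
          calc (cC ^ (2:ℕ) * (ν' A * ENNReal.ofReal R)) * (ENNReal.ofReal (ℏ * R) * (ν' A *
                (ENNReal.ofReal ℏ⁻¹ * ∫⁻ x, g x ∂(muPlus n))))
              = (ENNReal.ofReal (ℏ * R) * ENNReal.ofReal ℏ⁻¹) *
                ((cC ^ (2:ℕ) * (ν' A * ENNReal.ofReal R)) *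
                  (ν' A * ∫⁻ x, g x ∂(muPlus n))) := by ring
            _ = (cC * ν' A * ENNReal.ofReal R) ^ (2:ℕ) * ∫⁻ x, g x ∂(muPlus n) := by
                rw [hhR]; ring
  -- eLpNorm formula
  have hsn : ∀ f : Ef n → ℂ, eLpNorm f 2 (muPlus n) =
      (∫⁻ x, (‖f x‖₊ : ENNReal) ^ (2:ℕ) ∂(muPlus n)) ^ ((1:ℝ)/2) := by
    intro f
    rw [eLpNorm_eq_lintegral_rpow_enorm_toReal (by norm_num) (by norm_num)]
    simp only [ENNReal.toReal_ofNat]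
    exact congrArg (· ^ ((1:ℝ)/2)) (lintegral_congr fun x => rpow_two_eq_pow_two ((‖f x‖₊ : ENNReal)))
  have hfinal : eLpNorm F 2 (muPlus n) ≤
      (cC * ν' A * ENNReal.ofReal R) * eLpNorm (⇑ξ) 2 (muPlus n) := by
    rw [hsn F, hsn (⇑ξ)]
    have h2 : (∫⁻ x, (‖ξ x‖₊ : ENNReal) ^ (2:ℕ) ∂(muPlus n)) = ∫⁻ x, g x ∂(muPlus n) := by
      rw [hgdef]
    rw [h2]
    calc (∫⁻ x, (‖F x‖₊ : ENNReal) ^ (2:ℕ) ∂(muPlus n)) ^ ((1:ℝ)/2)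
        ≤ ((cC * ν' A * ENNReal.ofReal R) ^ (2:ℕ) *
            ∫⁻ x, g x ∂(muPlus n)) ^ ((1:ℝ)/2) :=
          ENNReal.rpow_le_rpow hY (by norm_num)
      _ = (cC * ν' A * ENNReal.ofReal R) * (∫⁻ x, g x ∂(muPlus n)) ^ ((1:ℝ)/2) := by
          rw [ENNReal.mul_rpow_of_nonneg _ _ (by norm_num : (0:ℝ) ≤ 1/2), sq_sqrt_ennreal]
  -- conclusion
  have h0 : ⇑(S ξ) =ᵐ[muPlus n] F := by rw [hFdef]; exact hspec ξ
  calc ‖S ξ‖ = (eLpNorm (⇑(S ξ)) 2 (muPlus n)).toReal := Lp.norm_def _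
    _ = (eLpNorm F 2 (muPlus n)).toReal := by rw [eLpNorm_congr_ae h0]
    _ ≤ ((cC * ν' A * ENNReal.ofReal R) * eLpNorm (⇑ξ) 2 (muPlus n)).toReal :=
        ENNReal.toReal_mono
          (ENNReal.mul_ne_top
            (ENNReal.mul_ne_top (ENNReal.mul_ne_top hcC_ne hVA) ENNReal.ofReal_ne_top)
            (Lp.eLpNorm_ne_top ξ)) hfinal
    _ = (volume (Metric.closedBall (0 : Eb n) R)).toReal * R * C * ‖ξ‖ := by
        rw [ENNReal.toReal_mul, ENNReal.toReal_mul, ENNReal.toReal_mul, hcC,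
          ENNReal.toReal_ofReal hC, ENNReal.toReal_ofReal hR, ← Lp.norm_def]
        rw [hν', hA]
        ring

/-- For every smooth compactly supported `K` on `ℝ^{n−1}×ℝ^{n−1}×ℝ₊×ℝ₊` there is a
constant `M_K`, depending only on the support of `K` and independent of `ℏ`, such that
`‖κ_ℏ(K)‖ ≤ M_K · sup|K|` for all `0<ℏ≤1`.  (The constant works uniformly for all
kernels whose support is contained in that of `K`, which expresses that it depends
only on the support.) -/
theorem statement8 (n : ℕ) (hn : 1 ≤ n) (K : Eb n × Eb n × ℝ × ℝ → ℂ)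
    (hK : ContDiff ℝ ∞ K) (hK' : HasCompactSupport K) :
    ∃ M : ℝ, ∀ K' : Eb n × Eb n × ℝ × ℝ → ℂ,
      ContDiff ℝ ∞ K' → HasCompactSupport K' → tsupport K' ⊆ tsupport K →
      ∀ ℏ ∈ Ioc (0:ℝ) 1, ∀ S : HS n →L[ℂ] HS n, kappaSpec n ℏ K' S →
        ‖S‖ ≤ M * ⨆ q : Eb n × Eb n × ℝ × ℝ, ‖K' q‖ := by
  obtain ⟨R₀, hR₀⟩ := hK'.isBounded.subset_closedBall (0 : Eb n × Eb n × ℝ × ℝ)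
  set R : ℝ := max R₀ 1 with hRdef
  have hR1 : (1:ℝ) ≤ R := le_max_right _ _
  have hR : (0:ℝ) ≤ R := by linarith
  have hRsupp : tsupport K ⊆ Metric.closedBall 0 R :=
    hR₀.trans (Metric.closedBall_subset_closedBall (le_max_left _ _))
  refine ⟨(volume (Metric.closedBall (0 : Eb n) R)).toReal * R, ?_⟩
  intro K' hK'c hK'supp hsub ℏ hℏ S hspec
  set C : ℝ := ⨆ q : Eb n × Eb n × ℝ × ℝ, ‖K' q‖ with hCdef
  have hbdd : BddAbove (Set.range fun q : Eb n × Eb n × ℝ × ℝ => ‖K' q‖) :=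
    hK'c.continuous.norm.bddAbove_range_of_hasCompactSupport hK'supp.norm
  have hbound : ∀ q, ‖K' q‖ ≤ C := fun q => le_ciSup hbdd q
  have hC : 0 ≤ C := le_trans (norm_nonneg _) (hbound 0)
  have hvan : ∀ (x' y' : Eb n) (a b : ℝ),
      (R < dist y' 0 ∨ R < |a| ∨ R < |b|) → K' (x', y', a, b) = 0 := by
    intro x' y' a b h
    apply image_eq_zero_of_notMem_tsupport
    intro hmem
    have hball : (x', y', a, b) ∈ Metric.closedBall (0 : Eb n × Eb n × ℝ × ℝ) R :=
      hRsupp (hsub hmem)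
    rw [Metric.mem_closedBall] at hball
    simp only [Prod.dist_eq, Prod.fst_zero, Prod.snd_zero, max_le_iff,
      Real.dist_eq, sub_zero] at hball
    rcases h with h | h | h <;> linarith [hball.1, hball.2.1, hball.2.2.1, hball.2.2.2]
  exact kappa_op_bound n K' hK'c.continuous hC hR hbound hvan hℏ.1 S hspec
end
end

section
/- For every f ∈ C_c^∞(ℝⁿ×ℝⁿ) and every smooth compactly supported function K on ℝ^{n−1}×ℝ^{n−1}×ℝ₊×ℝ₊, one has ‖π₀^∂(f⊕K)‖ ≥ ‖π₀^∂(f⊕0)‖; i.e., adding the regularizing kernel term K cannot decrease the operator norm below that of the pure half-convolution part. -/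
open MeasureTheory Filter Topology Set
open scoped ENNReal NNReal
open scoped ContDiff

noncomputable section

namespace Stmt16Aux

/-- The domain of the boundary Hilbert space. -/
abbrev Q3 (n : ℕ) : Type := Eb n × Eb n × ℝ

/-- The half-space in the normal variable. -/
def SB (n : ℕ) : Set (Q3 n) := {q : Q3 n | 0 ≤ q.2.2}

lemma muB_eq (n : ℕ) : muB n = (volume : Measure (Q3 n)).restrict (SB n) := rfl

lemma measurableSet_SB (n : ℕ) : MeasurableSet (SB n) :=
  measurableSet_le measurable_const (measurable_snd.comp measurable_snd)

/-- Translation in the last (normal) coordinate, as a homeomorphism. -/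
def shiftH (n : ℕ) (t : ℝ) : Q3 n ≃ₜ Q3 n :=
  (Homeomorph.refl (Eb n)).prodCongr ((Homeomorph.refl (Eb n)).prodCongr (Homeomorph.addRight t))

lemma shiftH_eq (n : ℕ) (t : ℝ) :
    ⇑(shiftH n t) = fun q : Q3 n => (q.1, q.2.1, q.2.2 + t) := by
  funext q; rfl

lemma shift_mp (n : ℕ) (t : ℝ) :
    MeasurePreserving (fun q : Q3 n => (q.1, q.2.1, q.2.2 + t)) volume volume := by
  have hvol : (volume : Measure (Q3 n)) =
      (volume : Measure (Eb n)).prod ((volume : Measure (Eb n)).prod (volume : Measure ℝ)) := by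
    rw [Measure.volume_eq_prod _ _, Measure.volume_eq_prod]
  have h := (MeasurePreserving.id (volume : Measure (Eb n))).prod
    ((MeasurePreserving.id (volume : Measure (Eb n))).prod
      (measurePreserving_add_right (volume : Measure ℝ) t))
  have hfun : (fun q : Q3 n => (q.1, q.2.1, q.2.2 + t)) =
      Prod.map (id : Eb n → Eb n) (Prod.map (id : Eb n → Eb n) (· + t)) := by
    funext q; rfl
  rw [hvol, hfun]
  exact h

lemma shift_me (n : ℕ) (t : ℝ) :
    MeasurableEmbedding (fun q : Q3 n => (q.1, q.2.1, q.2.2 + t)) := by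
  have h := (shiftH n t).measurableEmbedding
  rwa [shiftH_eq] at h

lemma lintegral_shift (n : ℕ) (t : ℝ) (F : Q3 n → ℝ≥0∞) :
    (∫⁻ q in SB n, F (q.1, q.2.1, q.2.2 - t) ∂(volume : Measure (Q3 n)))
      = ∫⁻ p in {p : Q3 n | 0 ≤ p.2.2 + t}, F p ∂volume := by
  have hS' : MeasurableSet {p : Q3 n | 0 ≤ p.2.2 + t} :=
    measurableSet_le measurable_const ((measurable_snd.comp measurable_snd).add_const t)
  rw [← lintegral_indicator (measurableSet_SB n), ← lintegral_indicator hS',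
    ← (shift_mp n t).lintegral_comp_emb (shift_me n t)
      ((SB n).indicator fun q => F (q.1, q.2.1, q.2.2 - t))]
  congr 1
  funext p
  by_cases hp : 0 ≤ p.2.2 + t
  · simp [Set.indicator_apply, SB, hp, add_sub_cancel_right]
  · simp [Set.indicator_apply, SB, hp, add_sub_cancel_right]

lemma slice_ae (n : ℕ) {φ ψ : Q3 n → ℂ} (h : φ =ᵐ[muB n] ψ) :
    ∀ᵐ q ∂(muB n), ∀ᵐ w' : Eb n ∂volume, ∀ᵐ wn : ℝ ∂(volume.restrict (Ioi (0:ℝ))),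
      φ (q.1, w', wn) = ψ (q.1, w', wn) := by
  have h0 : ∀ᵐ z ∂(volume : Measure (Q3 n)), 0 ≤ z.2.2 → φ z = ψ z := by
    have := (ae_restrict_iff' (μ := (volume : Measure (Q3 n)))
      (measurableSet_SB n) (p := fun z => φ z = ψ z)).mp h
    exact this
  rw [Measure.volume_eq_prod] at h0
  have h1 := Measure.ae_ae_of_ae_prod h0
  set P : Eb n → Prop := fun x => ∀ᵐ w' : Eb n ∂volume,
      ∀ᵐ wn : ℝ ∂(volume.restrict (Ioi (0:ℝ))), φ (x, w', wn) = ψ (x, w', wn) with hP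
  have h2 : ∀ᵐ x ∂(volume : Measure (Eb n)), P x := by
    filter_upwards [h1] with x hx
    rw [Measure.volume_eq_prod] at hx
    have h3 := Measure.ae_ae_of_ae_prod hx
    filter_upwards [h3] with w' hw'
    rw [ae_restrict_iff' measurableSet_Ioi]
    filter_upwards [hw'] with wn hwn
    exact fun h0wn => hwn h0wn.le
  have hnull : (muB n) {q : Q3 n | ¬ P q.1} = 0 := by
    have hset : {q : Q3 n | ¬ P q.1} = {x : Eb n | ¬ P x} ×ˢ (Set.univ : Set (Eb n × ℝ)) := by
      ext q; simp [Set.mem_prod]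
    have hvol : (volume : Measure (Q3 n)) {q : Q3 n | ¬ P q.1} = 0 := by
      rw [hset, Measure.volume_eq_prod _ _, Measure.prod_prod]
      rw [ae_iff] at h2
      rw [h2, zero_mul]
    refine le_antisymm ?_ zero_le
    calc (muB n) {q : Q3 n | ¬ P q.1}
        ≤ (volume : Measure (Q3 n)) {q : Q3 n | ¬ P q.1} :=
          Measure.le_iff'.mp Measure.restrict_le_self _
      _ = 0 := hvol
  rw [ae_iff]
  exact hnull

lemma dblInt_congr (n : ℕ) {φ ψ : Q3 n → ℂ} (h : φ =ᵐ[muB n] ψ)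
    (c : Q3 n → Eb n → ℝ → ℂ) :
    (fun q : Q3 n => ∫ w' : Eb n, ∫ wn in Ioi (0:ℝ), c q w' wn * φ (q.1, w', wn)) =ᵐ[muB n]
    (fun q : Q3 n => ∫ w' : Eb n, ∫ wn in Ioi (0:ℝ), c q w' wn * ψ (q.1, w', wn)) := by
  filter_upwards [slice_ae n h] with q hq
  refine integral_congr_ae ?_
  filter_upwards [hq] with w' hw'
  refine integral_congr_ae ?_
  filter_upwards [hw'] with wn hwn
  rw [hwn]

lemma inner_shift (t : ℝ) (ht : 0 ≤ t) (A : ℝ → ℂ) (b : ℝ → ℂ)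
    (hb : ∀ s, b s ≠ 0 → 0 < s) :
    ∫ wn in Ioi (0:ℝ), A wn * b (wn - t) = ∫ s in Ioi (0:ℝ), A (s + t) * b s := by
  have h1 : (∫ wn in Ioi (0:ℝ), A wn * b (wn - t))
      = ∫ wn, ((Ioi (0:ℝ)).indicator fun wn => A wn * b (wn - t)) wn :=
    (integral_indicator measurableSet_Ioi).symm
  have h2 : (∫ s in Ioi (0:ℝ), A (s + t) * b s)
      = ∫ s, ((Ioi (0:ℝ)).indicator fun s => A (s + t) * b s) s :=
    (integral_indicator measurableSet_Ioi).symm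
  have h3 := integral_add_right_eq_self (μ := (volume : Measure ℝ))
    ((Ioi (0:ℝ)).indicator fun wn => A wn * b (wn - t)) t
  rw [h1, h2, ← h3]
  refine integral_congr_ae (Filter.Eventually.of_forall fun s => ?_)
  by_cases hbs : b s = 0
  · simp [Set.indicator_apply, hbs, add_sub_cancel_right]
  · have hs : 0 < s := hb s hbs
    have hst : 0 < s + t := by linarith
    simp [Set.indicator_apply, hs, hst, add_sub_cancel_right]

lemma key (n : ℕ) (f : Ef n × Ef n → ℂ) (K : Eb n × Eb n × ℝ × ℝ → ℂ)
    (C : ℝ) (hC : ∀ q : Eb n × Eb n × ℝ × ℝ, C < q.2.2.2 → K q = 0)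
    (B₁ B₀ : HB n →L[ℂ] HB n)
    (hB₁ : piBSpec n f K B₁) (hB₀ : piBSpec n f (fun _ => 0) B₀)
    (R : ℝ) (g : Q3 n → ℂ) (hg : StronglyMeasurable g)
    (hg0 : ∀ q, g q ≠ 0 → 0 < q.2.2 ∧ q.2.2 < R)
    (hmem : MemLp g 2 (muB n)) :
    ‖B₀ (hmem.toLp g)‖ ≤ ‖B₁‖ * ‖hmem.toLp g‖ := by
  set t : ℝ := max C 0 with htdef
  have ht0 : 0 ≤ t := le_max_right _ _
  have htC : C ≤ t := le_max_left _ _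
  set u : Q3 n → ℂ := fun q => g (q.1, q.2.1, q.2.2 - t) with hu
  have hu_sm : StronglyMeasurable u := by
    refine hg.comp_measurable ?_
    exact measurable_fst.prodMk ((measurable_fst.comp measurable_snd).prodMk
      ((measurable_snd.comp measurable_snd).sub_const t))
  -- the two basic lintegral facts about the shift
  have hIle : ∀ F : Q3 n → ℝ≥0∞,
      (∫⁻ q, F q ∂(muB n)) ≤ ∫⁻ q, F (q.1, q.2.1, q.2.2 - t) ∂(muB n) := by
    intro F
    rw [muB_eq]
    rw [lintegral_shift n t F]
    exact lintegral_mono_set (fun q hq => by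
      simp only [SB, Set.mem_setOf_eq] at hq ⊢; linarith)
  have hIeq : ∀ F : Q3 n → ℝ≥0∞, (∀ p, F p ≠ 0 → 0 < p.2.2 ∧ p.2.2 < R) →
      (∫⁻ q, F (q.1, q.2.1, q.2.2 - t) ∂(muB n)) = ∫⁻ q, F q ∂(muB n) := by
    intro F hF
    rw [muB_eq, lintegral_shift n t F]
    have hS' : MeasurableSet {p : Q3 n | 0 ≤ p.2.2 + t} :=
      measurableSet_le measurable_const ((measurable_snd.comp measurable_snd).add_const t)
    rw [← lintegral_indicator hS', ← lintegral_indicator (measurableSet_SB n)]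
    congr 1
    funext p
    by_cases hFp : F p = 0
    · have e1 : ∀ s : Set (Q3 n), s.indicator F p = 0 := fun s => by
        by_cases hp : p ∈ s
        · rw [Set.indicator_of_mem hp, hFp]
        · exact Set.indicator_of_notMem hp F
      rw [e1, e1]
    · have hp := hF p hFp
      have h1 : 0 ≤ p.2.2 + t := by linarith [hp.1]
      have h2 : p ∈ SB n := le_of_lt hp.1
      simp [Set.indicator_apply, h1, h2]
  -- norm identity for u
  have hnn : (∫⁻ q, (‖u q‖₊ : ℝ≥0∞) ^ (2:ℝ) ∂(muB n))
      = ∫⁻ q, (‖g q‖₊ : ℝ≥0∞) ^ (2:ℝ) ∂(muB n) := by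
    refine hIeq (fun p => (‖g p‖₊ : ℝ≥0∞) ^ (2:ℝ)) (fun p hp => ?_)
    refine hg0 p (fun hgp => hp ?_)
    simp [hgp, ENNReal.zero_rpow_of_pos (by norm_num : (0:ℝ) < 2)]
  have hsnorm_u : eLpNorm u 2 (muB n) = eLpNorm g 2 (muB n) := by
    rw [eLpNorm_eq_lintegral_rpow_enorm_toReal (by norm_num) (by norm_num),
      eLpNorm_eq_lintegral_rpow_enorm_toReal (by norm_num) (by norm_num)]
    rw [ENNReal.toReal_ofNat]; simp only [enorm_eq_nnnorm, hnn]
  have hmemu : MemLp u 2 (muB n) :=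
    ⟨hu_sm.aestronglyMeasurable, by rw [hsnorm_u]; exact hmem.2⟩
  set ζ : HB n := hmem.toLp g with hζ
  set ξt : HB n := hmemu.toLp u with hξt
  have hnorm_ξt : ‖ξt‖ = ‖ζ‖ := by
    rw [hζ, hξt, Lp.norm_toLp, Lp.norm_toLp, hsnorm_u]
  -- the translated double integral
  set G : Q3 n → ℂ := fun q => ∫ w' : Eb n, ∫ wn in Ioi (0:ℝ),
    f ((q.1, (0:ℝ)), (q.2.1 - w', q.2.2 - wn)) * g (q.1, w', wn) with hG
  -- B₀ ζ is a.e. G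
  have claim1 : ⇑(B₀ ζ) =ᵐ[muB n] G := by
    refine (hB₀ ζ).trans ?_
    have hcongr := dblInt_congr n (hmem.coeFn_toLp)
      (fun q w' wn => f ((q.1, (0:ℝ)), (q.2.1 - w', q.2.2 - wn)) +
        (fun _ : Eb n × Eb n × ℝ × ℝ => (0:ℂ)) (q.1, q.2.1 - w', q.2.2, wn))
    refine hcongr.trans ?_
    refine Filter.EventuallyEq.of_eq ?_
    funext q
    simp only [add_zero, hG]
  -- B₁ ξt is a.e. the shift of G
  have claim2 : ⇑(B₁ ξt) =ᵐ[muB n] fun q : Q3 n => G (q.1, q.2.1, q.2.2 - t) := by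
    refine (hB₁ ξt).trans ?_
    have hcongr := dblInt_congr n (hmemu.coeFn_toLp)
      (fun q w' wn => f ((q.1, (0:ℝ)), (q.2.1 - w', q.2.2 - wn)) +
        K (q.1, q.2.1 - w', q.2.2, wn))
    refine hcongr.trans ?_
    refine Filter.EventuallyEq.of_eq ?_
    funext q
    simp only [hG]
    refine integral_congr_ae (Filter.Eventually.of_forall fun w' => ?_)
    have hkill : ∀ wn : ℝ,
        (f ((q.1, (0:ℝ)), (q.2.1 - w', q.2.2 - wn)) + K (q.1, q.2.1 - w', q.2.2, wn))
          * u (q.1, w', wn)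
        = f ((q.1, (0:ℝ)), (q.2.1 - w', q.2.2 - wn)) * u (q.1, w', wn) := by
      intro wn
      by_cases hu0 : u (q.1, w', wn) = 0
      · rw [hu0, mul_zero, mul_zero]
      · have h1 := hg0 _ hu0
        have h2 : K (q.1, q.2.1 - w', q.2.2, wn) = 0 := by
          refine hC _ ?_
          show C < wn
          have : 0 < wn - t := h1.1
          linarith
        rw [h2, add_zero]
    refine (integral_congr_ae (Filter.Eventually.of_forall fun wn => hkill wn)).trans ?_
    have hb : ∀ s, g (q.1, w', s) ≠ 0 → 0 < s := fun s hs => (hg0 _ hs).1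
    have hshift : (∫ wn in Ioi (0:ℝ),
          f ((q.1, (0:ℝ)), (q.2.1 - w', q.2.2 - wn)) * g (q.1, w', wn - t))
        = ∫ s in Ioi (0:ℝ),
          f ((q.1, (0:ℝ)), (q.2.1 - w', q.2.2 - (s + t))) * g (q.1, w', s) :=
      inner_shift t ht0 (fun wn => f ((q.1, (0:ℝ)), (q.2.1 - w', q.2.2 - wn)))
        (fun s => g (q.1, w', s)) hb
    refine hshift.trans ?_
    refine integral_congr_ae (Filter.Eventually.of_forall fun s => ?_)
    show f ((q.1, (0:ℝ)), (q.2.1 - w', q.2.2 - (s + t))) * g (q.1, w', s)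
        = f ((q.1, (0:ℝ)), (q.2.1 - w', (q.2.2 - t) - s)) * g (q.1, w', s)
    rw [show q.2.2 - (s + t) = q.2.2 - t - s from by ring]
  -- norm comparison
  have hle : eLpNorm G 2 (muB n)
      ≤ eLpNorm (fun q : Q3 n => G (q.1, q.2.1, q.2.2 - t)) 2 (muB n) := by
    rw [eLpNorm_eq_lintegral_rpow_enorm_toReal (by norm_num) (by norm_num),
      eLpNorm_eq_lintegral_rpow_enorm_toReal (by norm_num) (by norm_num), ENNReal.toReal_ofNat]
    refine ENNReal.rpow_le_rpow ?_ (by norm_num)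
    exact hIle (fun p => (‖G p‖₊ : ℝ≥0∞) ^ (2:ℝ))
  calc ‖B₀ ζ‖ = (eLpNorm G 2 (muB n)).toReal := by
        rw [Lp.norm_def, eLpNorm_congr_ae claim1]
    _ ≤ (eLpNorm (fun q : Q3 n => G (q.1, q.2.1, q.2.2 - t)) 2 (muB n)).toReal := by
        refine ENNReal.toReal_mono ?_ hle
        rw [← eLpNorm_congr_ae claim2]
        exact (Lp.eLpNorm_lt_top (B₁ ξt)).ne
    _ = ‖B₁ ξt‖ := by rw [Lp.norm_def, eLpNorm_congr_ae claim2]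
    _ ≤ ‖B₁‖ * ‖ξt‖ := B₁.le_opNorm ξt
    _ = ‖B₁‖ * ‖ζ‖ := by rw [hnorm_ξt]

end Stmt16Aux

/-- For every `f ∈ C_c^∞(ℝⁿ×ℝⁿ)` and every smooth compactly supported `K` on
`ℝ^{n−1}×ℝ^{n−1}×ℝ₊×ℝ₊`, `‖π₀^∂(f⊕K)‖ ≥ ‖π₀^∂(f⊕0)‖`: adding the regularizing kernel
term `K` cannot decrease the operator norm below that of the pure half-convolution part. -/
theorem statement16 (n : ℕ) (hn : 1 ≤ n) (f : Ef n × Ef n → ℂ)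
    (hf : ContDiff ℝ ∞ f) (hf' : HasCompactSupport f)
    (K : Eb n × Eb n × ℝ × ℝ → ℂ)
    (hK : ContDiff ℝ ∞ K) (hK' : HasCompactSupport K)
    (B₁ B₀ : HB n →L[ℂ] HB n)
    (hB₁ : piBSpec n f K B₁) (hB₀ : piBSpec n f (fun _ => 0) B₀) :
    ‖B₀‖ ≤ ‖B₁‖ := by
  classical
  open Stmt16Aux in
  -- bound on the support of K in the last variable
  obtain ⟨C, hC⟩ : ∃ C : ℝ, ∀ q : Eb n × Eb n × ℝ × ℝ, C < q.2.2.2 → K q = 0 := by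
    have h1 : IsCompact ((fun q : Eb n × Eb n × ℝ × ℝ => q.2.2.2) '' tsupport K) :=
      hK'.image (continuous_snd.comp (continuous_snd.comp continuous_snd))
    obtain ⟨C, hCb⟩ := h1.bddAbove
    refine ⟨C, fun q hq => ?_⟩
    by_contra hKq
    have hmem : q ∈ tsupport K := subset_tsupport K (by simpa [Function.mem_support] using hKq)
    have hle : q.2.2.2 ≤ C := hCb (Set.mem_image_of_mem _ hmem)
    linarith
  refine B₀.opNorm_le_bound (norm_nonneg B₁) (fun ξ => ?_)
  -- the hyperplane {qₙ = 0} is null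
  have hplane : ∀ᵐ q ∂(muB n), q.2.2 ≠ 0 := by
    rw [ae_iff]
    have hset : {q : Stmt16Aux.Q3 n | ¬ q.2.2 ≠ 0}
        = (Set.univ : Set (Eb n)) ×ˢ ((Set.univ : Set (Eb n)) ×ˢ ({0} : Set ℝ)) := by
      ext ⟨a, b, c⟩; simp [eq_comm]
    have hvol : (volume : Measure (Stmt16Aux.Q3 n)) {q : Stmt16Aux.Q3 n | ¬ q.2.2 ≠ 0} = 0 := by
      rw [hset, Measure.volume_eq_prod _ _, Measure.prod_prod, Measure.volume_eq_prod _ _, Measure.prod_prod]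
      simp
    refine le_antisymm ?_ zero_le
    calc (muB n) {q : Stmt16Aux.Q3 n | ¬ q.2.2 ≠ 0}
        ≤ (volume : Measure (Stmt16Aux.Q3 n)) {q : Stmt16Aux.Q3 n | ¬ q.2.2 ≠ 0} :=
          Measure.le_iff'.mp Measure.restrict_le_self _
      _ = 0 := hvol
  have hpos : ∀ᵐ q ∂(muB n), 0 < q.2.2 := by
    have hmem : ∀ᵐ q ∂(muB n), q ∈ SB n :=
      ae_restrict_mem (measurableSet_SB n)
    filter_upwards [hmem, hplane] with q h1 h2
    exact lt_of_le_of_ne h1 (Ne.symm h2)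
  -- truncations
  set σ : ℕ → Set (Stmt16Aux.Q3 n) := fun m => {q | 0 < q.2.2 ∧ q.2.2 < (m:ℝ)} with hσ
  have hσmeas : ∀ m, MeasurableSet (σ m) := fun m =>
    (measurableSet_lt measurable_const (measurable_snd.comp measurable_snd)).inter
      (measurableSet_lt (measurable_snd.comp measurable_snd) measurable_const)
  set g : ℕ → Stmt16Aux.Q3 n → ℂ := fun m => (σ m).indicator ⇑ξ with hg
  have hg_sm : ∀ m, StronglyMeasurable (g m) := fun m =>
    (Lp.stronglyMeasurable ξ).indicator (hσmeas m)
  have hg0 : ∀ m, ∀ q, g m q ≠ 0 → 0 < q.2.2 ∧ q.2.2 < (m:ℝ) := by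
    intro m q hq
    by_contra h
    have hnm : q ∉ σ m := fun hmem => h hmem
    exact hq (by simp [hg, Set.indicator_of_notMem hnm])
  have hgmem : ∀ m, MemLp (g m) 2 (muB n) := fun m =>
    (Lp.memLp ξ).indicator (hσmeas m)
  set ζ : ℕ → HB n := fun m => (hgmem m).toLp (g m) with hζ
  have hkey : ∀ m, ‖B₀ (ζ m)‖ ≤ ‖B₁‖ * ‖ζ m‖ := fun m =>
    Stmt16Aux.key n f K C hC B₁ B₀ hB₁ hB₀ (m:ℝ) (g m) (hg_sm m) (hg0 m) (hgmem m)
  have hζ_le : ∀ m, ‖ζ m‖ ≤ ‖ξ‖ := by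
    intro m
    rw [hζ, Lp.norm_toLp, Lp.norm_def]
    exact ENNReal.toReal_mono (Lp.eLpNorm_ne_top ξ) (eLpNorm_indicator_le _)
  -- the error term
  set A : ℕ → Set (Stmt16Aux.Q3 n) := fun m => {q | (m:ℝ) ≤ q.2.2} with hA
  have hAmeas : ∀ m, MeasurableSet (A m) := fun m =>
    measurableSet_le measurable_const (measurable_snd.comp measurable_snd)
  have hdiff : ∀ m, ⇑(ξ - ζ m) =ᵐ[muB n] (A m).indicator ⇑ξ := by
    intro m
    refine (Lp.coeFn_sub ξ (ζ m)).trans ?_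
    have h1 : ⇑(ζ m) =ᵐ[muB n] g m := (hgmem m).coeFn_toLp
    filter_upwards [h1, hpos] with q h1q h2q
    simp only [Pi.sub_apply, h1q]
    by_cases hqm : q.2.2 < (m:ℝ)
    · have hmem : q ∈ σ m := ⟨h2q, hqm⟩
      have hnmem : q ∉ A m := by simp [hA]; exact hqm
      simp [hg, Set.indicator_of_mem hmem, Set.indicator_of_notMem hnmem]
    · have hnmem : q ∉ σ m := fun h => hqm h.2
      have hmem : q ∈ A m := le_of_not_gt hqm
      simp [hg, Set.indicator_of_notMem hnmem, Set.indicator_of_mem hmem]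
  -- the measure with density ‖ξ‖² is finite
  set ν : Measure (Stmt16Aux.Q3 n) :=
    (muB n).withDensity (fun q => (‖ξ q‖₊ : ℝ≥0∞) ^ (2:ℝ)) with hν
  have hν_fin : ν Set.univ ≠ (∞ : ℝ≥0∞) := by
    rw [hν, withDensity_apply _ MeasurableSet.univ, Measure.restrict_univ]
    have := lintegral_rpow_enorm_lt_top_of_eLpNorm_lt_top (μ := muB n)
      (f := ⇑ξ) (by norm_num) (by norm_num) (Lp.eLpNorm_lt_top ξ)
    rw [ENNReal.toReal_ofNat] at this
    exact this.ne
  have hδ_eq : ∀ m, ‖ξ - ζ m‖ = ((ν (A m)).toReal) ^ (1/2 : ℝ) := by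
    intro m
    rw [Lp.norm_def, eLpNorm_congr_ae (hdiff m),
      eLpNorm_eq_lintegral_rpow_enorm_toReal (by norm_num) (by norm_num), ENNReal.toReal_ofNat]
    simp only [enorm_eq_nnnorm]
    have hpt : ∀ q, (‖(A m).indicator (⇑ξ) q‖₊ : ℝ≥0∞) ^ (2:ℝ)
        = (A m).indicator (fun q => (‖ξ q‖₊ : ℝ≥0∞) ^ (2:ℝ)) q := by
      intro q
      by_cases hq : q ∈ A m
      · simp [Set.indicator_of_mem hq]
      · simp [Set.indicator_of_notMem hq,
          ENNReal.zero_rpow_of_pos (by norm_num : (0:ℝ) < 2)]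
    rw [lintegral_congr hpt, lintegral_indicator (hAmeas m),
      ← withDensity_apply _ (hAmeas m), ← hν, ENNReal.toReal_rpow]
  have hν_tendsto : Tendsto (fun m => ν (A m)) atTop (𝓝 0) := by
    have hiInter : (⋂ m, A m) = ∅ := by
      ext q
      simp only [Set.mem_iInter, Set.mem_empty_iff_false, iff_false, not_forall, hA,
        Set.mem_setOf_eq, not_le]
      obtain ⟨m, hm⟩ := exists_nat_gt q.2.2
      exact ⟨m, hm⟩
    have h := tendsto_measure_iInter_atTop (μ := ν)
      (fun m => (hAmeas m).nullMeasurableSet)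
      (fun i j hij q hq => by
        simp only [hA, Set.mem_setOf_eq] at hq ⊢
        exact le_trans (by exact_mod_cast Nat.cast_le.mpr hij) hq)
      ⟨0, ne_top_of_le_ne_top hν_fin (measure_mono (Set.subset_univ _))⟩
    rw [hiInter] at h
    simpa [Function.comp_def] using h
  have hδ_tendsto : Tendsto (fun m => ‖ξ - ζ m‖) atTop (𝓝 0) := by
    have h1 : Tendsto (fun m => (ν (A m)).toReal) atTop (𝓝 (0:ℝ)) := by
      have := (ENNReal.tendsto_toReal (by simp : (0:ℝ≥0∞) ≠ (∞ : ℝ≥0∞))).comp hν_tendsto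
      simpa [Function.comp_def] using this
    have h2 : Tendsto (fun m => ((ν (A m)).toReal) ^ (1/2 : ℝ)) atTop (𝓝 ((0:ℝ) ^ (1/2:ℝ))) := by
      exact ((Real.continuousAt_rpow_const 0 (1/2) (Or.inr (by norm_num))).tendsto).comp h1
    rw [Real.zero_rpow (by norm_num)] at h2
    have hfun : (fun m => ‖ξ - ζ m‖) = fun m => ((ν (A m)).toReal) ^ (1/2 : ℝ) :=
      funext hδ_eq
    rw [hfun]
    exact h2
  -- conclusion
  have hbound : ∀ m, ‖B₀ ξ‖ ≤ ‖B₀‖ * ‖ξ - ζ m‖ + ‖B₁‖ * ‖ξ‖ := by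
    intro m
    have hsplit : B₀ ξ = B₀ (ξ - ζ m) + B₀ (ζ m) := by
      rw [← map_add]
      congr 1
      abel
    calc ‖B₀ ξ‖ = ‖B₀ (ξ - ζ m) + B₀ (ζ m)‖ := by rw [← hsplit]
      _ ≤ ‖B₀ (ξ - ζ m)‖ + ‖B₀ (ζ m)‖ := norm_add_le _ _
      _ ≤ ‖B₀‖ * ‖ξ - ζ m‖ + ‖B₁‖ * ‖ζ m‖ :=
          add_le_add (B₀.le_opNorm _) (hkey m)
      _ ≤ ‖B₀‖ * ‖ξ - ζ m‖ + ‖B₁‖ * ‖ξ‖ :=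
          add_le_add le_rfl (mul_le_mul_of_nonneg_left (hζ_le m) (norm_nonneg _))
  have hlim : Tendsto (fun m => ‖B₀‖ * ‖ξ - ζ m‖ + ‖B₁‖ * ‖ξ‖) atTop
      (𝓝 (‖B₀‖ * 0 + ‖B₁‖ * ‖ξ‖)) :=
    ((hδ_tendsto.const_mul _).add tendsto_const_nhds)
  have hfin := ge_of_tendsto' hlim hbound
  rw [mul_zero, zero_add] at hfin
  exact hfin
end
end
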